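/- arXiv:2107.03827 — 3 statements merged into one kernel-verified Lean document; each statement's English description precedes it below -/
import Mathlib

section
/- Let G be a finite simple graph with maximum degree Δ(G) ≥ 2 such that G has no spanning even subgraph without isolated vertices (i.e., no subgraph K with V(K) = V(G) in which every vertex has even degree and every vertex has degree at least 1). Then the palette index of G is strictly larger than the minimum degree of G, i.e., š(G) > δ(G). -/
/-!
Suppose a proper colouring has palettes `P₁, …, P_k` with `k ≤ δ`, so `k ≤ |Pᵢ|` for all `i`, and
also `2 ≤ |Pᵢ|` (if `δ ≤ 1` there is a single palette, that of a vertex of degree `Δ ≥ 2`). It is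
enough to find a colour set `S` meeting every palette in a nonempty even number of colours: the
edges coloured from `S` form a spanning even subgraph without isolated vertices.

Take `S` of maximum size among the colour sets meeting every palette evenly, and suppose it misses
some palette `P`. By maximality the parity map `x ↦ (|x ∩ Pᵢ| mod 2)ᵢ` is injective on sets `x` of
unused colours, so there are at most `k` unused colours; as they include `P`, they are exactly `P`,
`|P| = k`, and the parity map is a bijection from the subsets of `P` onto `𝔽₂ᵏ`. Every other palette
is then met by `S`; choose `z ∈ S` in one of them and `x ⊆ P` with the parity vector of `{z}`. Then
`S ∆ {z} ∆ x` meets every palette in a nonempty even set.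
-/

open SimpleGraph

/-- `c` is a proper edge-coloring of `G`: distinct edges sharing a vertex
receive distinct colors. -/
def IsProperEdgeColoring {V : Type*} (G : SimpleGraph V) (c : Sym2 V → ℕ) : Prop :=
  ∀ e₁ ∈ G.edgeSet, ∀ e₂ ∈ G.edgeSet, e₁ ≠ e₂ → (∃ v, v ∈ e₁ ∧ v ∈ e₂) → c e₁ ≠ c e₂

/-- The palette of a vertex `v`: the set of colors of edges incident with `v`. -/
def palette {V : Type*} (G : SimpleGraph V) (c : Sym2 V → ℕ) (v : V) : Set ℕ :=
  c '' (G.incidenceSet v)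

/-- The number of distinct palettes occurring among the vertices. -/
noncomputable def numPalettes {V : Type*} (G : SimpleGraph V) (c : Sym2 V → ℕ) : ℕ :=
  (Set.range (palette G c)).ncard

/-- The palette index of `G`: the minimum number of distinct palettes over all
proper edge-colorings of `G`. -/
noncomputable def paletteIndex {V : Type*} (G : SimpleGraph V) : ℕ :=
  sInf { n | ∃ c, IsProperEdgeColoring G c ∧ numPalettes G c = n }

/-- `G` has a spanning even subgraph without isolated vertices. -/
def ExistsSpanningEvenNoIsolated {V : Type*} (G : SimpleGraph V) : Prop :=
  ∃ K : SimpleGraph V, K ≤ G ∧ (∀ v, Even (K.neighborSet v).ncard) ∧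
    (∀ v, 1 ≤ (K.neighborSet v).ncard)

open Finset
open scoped symmDiff

namespace Finset

variable {α : Type*} [DecidableEq α] {𝒜 : Finset (Finset α)}

theorem even_card_symmDiff_inter_iff (s t P : Finset α) :
    Even #((s ∆ t) ∩ P) ↔ (Even #(s ∩ P) ↔ Even #(t ∩ P)) := by
  rw [show (s ∆ t) ∩ P = (s ∩ P) ∆ (t ∩ P) from inf_symmDiff_distrib_right s t P]
  generalize s ∩ P = a, t ∩ P = b
  rw [Finset.symmDiff_def, card_union_of_disjoint disjoint_sdiff_sdiff,
    ← card_sdiff_add_card_inter a b, ← card_sdiff_add_card_inter b a, inter_comm b a]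
  simp only [Nat.even_add]
  tauto

def MeetsEvenly (𝒜 : Finset (Finset α)) (S : Finset α) : Prop :=
  ∀ P ∈ 𝒜, Even #(S ∩ P)

instance (𝒜 : Finset (Finset α)) : DecidablePred (MeetsEvenly 𝒜) :=
  fun S => inferInstanceAs (Decidable (∀ P ∈ 𝒜, Even #(S ∩ P)))

theorem MeetsEvenly.symmDiff {s t : Finset α} (hs : MeetsEvenly 𝒜 s) (ht : MeetsEvenly 𝒜 t) :
    MeetsEvenly 𝒜 (s ∆ t) :=
  fun P hP => (even_card_symmDiff_inter_iff s t P).2 (iff_of_true (hs P hP) (ht P hP))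

/-- The parity vector `P ↦ #(x ∩ P) mod 2` on `𝒜`, encoded as its support. -/
def oddlyMet (𝒜 : Finset (Finset α)) (x : Finset α) : Finset (Finset α) :=
  𝒜.filter fun P => Odd #(x ∩ P)

theorem oddlyMet_eq_oddlyMet_iff {x y : Finset α} :
    oddlyMet 𝒜 x = oddlyMet 𝒜 y ↔ MeetsEvenly 𝒜 (x ∆ y) := by
  simp only [oddlyMet, filter_inj', MeetsEvenly, even_card_symmDiff_inter_iff,
    ← Nat.not_even_iff_odd, not_iff_not]

theorem injOn_oddlyMet {U S : Finset α} (hS : S ∈ U.powerset.filter (MeetsEvenly 𝒜))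
    (hmax : ∀ T ∈ U.powerset.filter (MeetsEvenly 𝒜), #T ≤ #S) :
    Set.InjOn (oddlyMet 𝒜) ↑(U \ S).powerset := by
  rw [mem_filter, mem_powerset] at hS
  intro x hx y hy hxy
  rw [mem_coe, mem_powerset] at hx hy
  have hdisj : Disjoint S (x ∆ y) :=
    disjoint_of_subset_right (symmDiff_subset_union.trans (union_subset hx hy)) disjoint_sdiff
  have hle := hmax (S ∆ (x ∆ y)) <| mem_filter.2
    ⟨mem_powerset.2 <| symmDiff_subset_union.trans <| union_subset hS.1 <|
      symmDiff_subset_union.trans <| union_subset (hx.trans sdiff_subset) (hy.trans sdiff_subset),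
     hS.2.symmDiff (oddlyMet_eq_oddlyMet_iff.1 hxy)⟩
  rw [symmDiff_eq_union hdisj, card_union_of_disjoint hdisj] at hle
  exact symmDiff_eq_empty.1 (card_eq_zero.1 (by omega))

theorem card_le_card_of_injOn_oddlyMet {R : Finset α}
    (h : Set.InjOn (oddlyMet 𝒜) ↑R.powerset) : #R ≤ #𝒜 := by
  have := card_le_card_of_injOn (t := 𝒜.powerset) (oddlyMet 𝒜)
    (fun x _ => mem_coe.2 (mem_powerset.2 (filter_subset _ _))) h
  rwa [card_powerset, card_powerset, Nat.pow_le_pow_iff_right (by norm_num)] at this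

theorem exists_meetsEvenly_of_surjOn_oddlyMet {S Pm P₀ : Finset α} (hS : MeetsEvenly 𝒜 S)
    (hSPm : Disjoint S Pm) (hP₀ : P₀ ∈ 𝒜) (hP₀m : P₀ ≠ Pm)
    (hhit : ∀ P ∈ 𝒜, P ≠ Pm → (S ∩ P).Nonempty)
    (hsurj : Set.SurjOn (oddlyMet 𝒜) ↑Pm.powerset ↑𝒜.powerset) :
    ∃ S, MeetsEvenly 𝒜 S ∧ ∀ P ∈ 𝒜, (S ∩ P).Nonempty := by
  obtain ⟨z, hz⟩ := hhit P₀ hP₀ hP₀m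
  rw [mem_inter] at hz
  obtain ⟨x, hxPm, hx⟩ : ∃ x ∈ (Pm.powerset : Set (Finset α)), oddlyMet 𝒜 x = oddlyMet 𝒜 {z} :=
    hsurj (mem_coe.2 (mem_powerset.2 (filter_subset _ 𝒜)))
  rw [mem_coe, mem_powerset] at hxPm
  have hodd : ∀ P ∈ 𝒜, z ∈ P → (x ∩ P).Nonempty := fun P hP hzP => by
    have : P ∈ oddlyMet 𝒜 x := hx ▸ mem_filter.2 ⟨hP, by simp [hzP]⟩
    exact card_pos.1 (mem_filter.1 this).2.pos
  have hxS : ∀ a ∈ x, a ∈ S ∆ (x ∆ {z}) := fun a ha => by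
    have : a ∉ S := disjoint_right.1 hSPm (hxPm ha)
    simp only [mem_symmDiff, mem_singleton]
    grind
  have hSS : ∀ a ∈ S, a ≠ z → a ∈ S ∆ (x ∆ {z}) := fun a ha haz => by
    have : a ∉ x := fun hax => disjoint_left.1 hSPm ha (hxPm hax)
    simp only [mem_symmDiff, mem_singleton]
    tauto
  refine ⟨S ∆ (x ∆ {z}), hS.symmDiff (oddlyMet_eq_oddlyMet_iff.1 hx), fun P hP => ?_⟩
  by_cases hzP : z ∈ P
  · obtain ⟨a, ha⟩ := hodd P hP hzP
    exact ⟨a, mem_inter.2 ⟨hxS a (mem_inter.1 ha).1, (mem_inter.1 ha).2⟩⟩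
  by_cases hPm : P = Pm
  · obtain ⟨a, ha⟩ := hodd P₀ hP₀ hz.2
    exact ⟨a, mem_inter.2 ⟨hxS a (mem_inter.1 ha).1, hPm ▸ hxPm (mem_inter.1 ha).1⟩⟩
  · obtain ⟨a, ha⟩ := hhit P hP hPm
    rw [mem_inter] at ha
    exact ⟨a, mem_inter.2 ⟨hSS a ha.1 (by rintro rfl; exact hzP ha.2), ha.2⟩⟩

theorem exists_meetsEvenly_forall_inter_nonempty (h𝒜 : ∀ P ∈ 𝒜, #𝒜 ≤ #P)
    (h2 : ∀ P ∈ 𝒜, 2 ≤ #P) : ∃ S, MeetsEvenly 𝒜 S ∧ ∀ P ∈ 𝒜, (S ∩ P).Nonempty := by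
  set U := 𝒜.sup id
  obtain ⟨S, hS, hmax⟩ := exists_max_image (U.powerset.filter (MeetsEvenly 𝒜)) card
    ⟨∅, mem_filter.2 ⟨empty_mem_powerset U, fun P _ => by simp⟩⟩
  have hinj := injOn_oddlyMet hS hmax
  rw [mem_filter, mem_powerset] at hS
  by_cases hhit : ∀ P ∈ 𝒜, (S ∩ P).Nonempty
  · exact ⟨S, hS.2, hhit⟩
  push Not at hhit
  obtain ⟨Pm, hPm, hSPm⟩ := hhit
  have hmissed : ∀ P ∈ 𝒜, S ∩ P = ∅ → P ⊆ U \ S := fun P hP hSP =>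
    subset_sdiff.2 ⟨le_sup (f := id) hP, (disjoint_iff_inter_eq_empty.2 hSP).symm⟩
  have hUS : U \ S = Pm := (eq_of_subset_of_card_le (hmissed Pm hPm hSPm)
    ((card_le_card_of_injOn_oddlyMet hinj).trans (h𝒜 Pm hPm))).symm
  rw [hUS] at hinj
  have hcard : #Pm = #𝒜 := le_antisymm (card_le_card_of_injOn_oddlyMet hinj) (h𝒜 Pm hPm)
  have hsurj : Set.SurjOn (oddlyMet 𝒜) ↑Pm.powerset ↑𝒜.powerset :=
    surjOn_of_injOn_of_card_le _ (fun x _ => mem_coe.2 (mem_powerset.2 (filter_subset _ _))) hinj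
      (by rw [card_powerset, card_powerset, hcard])
  have hhit : ∀ P ∈ 𝒜, P ≠ Pm → (S ∩ P).Nonempty := fun P hP hne =>
    nonempty_iff_ne_empty.2 fun hSP => hne <|
      eq_of_subset_of_card_le (hUS ▸ hmissed P hP hSP) (hcard ▸ h𝒜 P hP)
  obtain ⟨P₀, hP₀, hP₀m⟩ := exists_mem_ne (s := 𝒜) (by have := h2 Pm hPm; omega) Pm
  exact exists_meetsEvenly_of_surjOn_oddlyMet hS.2 (disjoint_iff_inter_eq_empty.2 hSPm) hP₀ hP₀m
    hhit hsurj

end Finset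

namespace IsProperEdgeColoring

variable {V : Type*} {G : SimpleGraph V} {c : Sym2 V → ℕ}

theorem of_injective (hc : Function.Injective c) : IsProperEdgeColoring G c :=
  fun _ _ _ _ hne _ h => hne (hc h)

theorem injOn_incidenceSet (hc : IsProperEdgeColoring G c) (v : V) :
    Set.InjOn c (G.incidenceSet v) :=
  fun _ he₁ _ he₂ h => by_contra fun hne => hc _ he₁.1 _ he₂.1 hne ⟨v, he₁.2, he₂.2⟩ h

end IsProperEdgeColoring

theorem exists_numPalettes_eq_paletteIndex {V : Type*} [Countable V] (G : SimpleGraph V) :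
    ∃ c, IsProperEdgeColoring G c ∧ numPalettes G c = paletteIndex G := by
  obtain ⟨f, hf⟩ := exists_injective_nat (Sym2 V)
  have hne : {n | ∃ c, IsProperEdgeColoring G c ∧ numPalettes G c = n}.Nonempty :=
    ⟨_, f, IsProperEdgeColoring.of_injective hf, rfl⟩
  exact Nat.sInf_mem hne

section Palettes

variable {V : Type*} {G : SimpleGraph V} {c : Sym2 V → ℕ}

variable (G c) in
def subgraphOfColors (S : Set ℕ) : SimpleGraph V :=
  fromEdgeSet (G.edgeSet ∩ c ⁻¹' S)

theorem subgraphOfColors_le {S : Set ℕ} : subgraphOfColors G c S ≤ G :=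
  fun _ _ h => ((fromEdgeSet_adj _).1 h).1.1

theorem ncard_neighborSet_subgraphOfColors (hc : IsProperEdgeColoring G c) (S : Set ℕ) (v : V) :
    ((subgraphOfColors G c S).neighborSet v).ncard = (S ∩ palette G c v).ncard := by
  classical
  rw [← Set.ncard_congr' ((subgraphOfColors G c S).incidenceSetEquivNeighborSet v)]
  have : (subgraphOfColors G c S).incidenceSet v = G.incidenceSet v ∩ c ⁻¹' S := by
    ext e
    have := G.not_isDiag_of_mem_edgeSet (e := e)
    simp only [incidenceSet, subgraphOfColors, edgeSet_fromEdgeSet, Set.mem_inter_iff,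
      Set.mem_sdiff, Set.mem_preimage, Sym2.mem_diagSet, Set.mem_ofPred_eq]
    tauto
  rw [this, ← (hc.injOn_incidenceSet v).mono Set.inter_subset_left |>.ncard_image,
    Set.image_inter_preimage, Set.inter_comm, palette]

variable [Fintype V] [DecidableEq V] [DecidableRel G.Adj]

variable (G c) in
def paletteFinset (v : V) : Finset ℕ := (G.incidenceFinset v).image c

theorem coe_paletteFinset (v : V) : (paletteFinset G c v : Set ℕ) = palette G c v := by
  simp [paletteFinset, palette, coe_incidenceFinset]

theorem card_paletteFinset (hc : IsProperEdgeColoring G c) (v : V) :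
    #(paletteFinset G c v) = G.degree v := by
  rw [paletteFinset, card_image_of_injOn (by simpa using hc.injOn_incidenceSet v),
    card_incidenceFinset_eq_degree]

variable (G c) in
theorem numPalettes_eq_card_image : numPalettes G c = #(univ.image (paletteFinset G c)) := by
  rw [numPalettes, ← Set.ncard_coe_finset, coe_image, coe_univ, Set.image_univ,
    ← funext coe_paletteFinset, Set.range_comp',
    Set.ncard_image_of_injective _ coe_injective]

theorem two_le_degree_of_card_palettes_le_minDegree (hc : IsProperEdgeColoring G c)
    (hΔ : 2 ≤ G.maxDegree) (h : #(univ.image (paletteFinset G c)) ≤ G.minDegree) (v : V) :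
    2 ≤ G.degree v := by
  by_contra! hv
  have : Nonempty V := ⟨v⟩
  obtain ⟨w, hw⟩ := G.exists_maximal_degree_vertex
  have hvw : paletteFinset G c v = paletteFinset G c w :=
    card_le_one.1 (by have := G.minDegree_le_degree v; omega) _
      (mem_image_of_mem _ (mem_univ v)) _ (mem_image_of_mem _ (mem_univ w))
  have := congrArg card hvw
  rw [card_paletteFinset hc, card_paletteFinset hc, ← hw] at this
  omega

end Palettes

theorem exists_spanning_even_of_numPalettes_le_minDegree {V : Type*} [Fintype V]
    {G : SimpleGraph V} [DecidableRel G.Adj] {c : Sym2 V → ℕ} (hc : IsProperEdgeColoring G c)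
    (hΔ : 2 ≤ G.maxDegree) (h : numPalettes G c ≤ G.minDegree) :
    ExistsSpanningEvenNoIsolated G := by
  classical
  rw [numPalettes_eq_card_image] at h
  obtain ⟨S, hSeven, hSmeets⟩ := exists_meetsEvenly_forall_inter_nonempty
    (forall_mem_image.2 fun v _ => card_paletteFinset hc v ▸ h.trans (G.minDegree_le_degree v))
    (forall_mem_image.2 fun v _ =>
      card_paletteFinset hc v ▸ two_le_degree_of_card_palettes_le_minDegree hc hΔ h v)
  have hdeg : ∀ v, ((subgraphOfColors G c S).neighborSet v).ncard = #(S ∩ paletteFinset G c v) :=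
    fun v => by
      rw [ncard_neighborSet_subgraphOfColors hc, ← coe_paletteFinset, ← coe_inter,
        Set.ncard_coe_finset]
  refine ⟨subgraphOfColors G c S, subgraphOfColors_le, fun v => ?_, fun v => ?_⟩
  · rw [hdeg]
    exact hSeven _ (mem_image_of_mem _ (mem_univ v))
  · rw [hdeg]
    exact (hSmeets _ (mem_image_of_mem _ (mem_univ v))).card_pos

theorem palette_index_gt_min_degree {V : Type*} [Fintype V] (G : SimpleGraph V)
    [DecidableRel G.Adj] (hdelta : 2 ≤ G.maxDegree)
    (hno : ¬ ExistsSpanningEvenNoIsolated G) :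
    G.minDegree < paletteIndex G := by
  obtain ⟨c, hc, hcard⟩ := exists_numPalettes_eq_paletteIndex G
  rw [← hcard]
  by_contra! h
  exact hno (exists_spanning_even_of_numPalettes_le_minDegree hc hdelta h)
end

section
/- For every odd integer r ≥ 3 there exists a finite simple r-regular graph G whose palette index attains the maximum admissible value, i.e., š(G) = r + 1. -/
open SimpleGraph

/-!
Join a hub to vertex `1` of each of `r` copies of the graph on `ZMod (r + 2)` obtained from the
complete graph by deleting the near-perfect matching `{p, -p}` and the edge `{0, 1}`; since `r + 2`
is odd this graph is `r`-regular. Coloring a gadget edge `pq` by its class `p + q ≠ 0`, rotated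
in each copy so that the hub edges fit, uses `r + 1` colors, so every palette is one of the
`r + 1` subsets of size `r` of these colors.

Conversely, each color class of a proper coloring is a matching, so over `ZMod 2` the palette
indicators of the vertices of one gadget add up to the indicator of the color `bᵢ` of its hub
edge. Thus the `r` unit vectors `e_{bᵢ}` lie in the span of the palette indicators. All palettes
have `r` elements, so either one of them leaves `{bᵢ}` and the span has dimension `> r`, or all of
them equal `{bᵢ}` and the span has dimension `≤ 1 < r`.
-/

section Palette
variable {V : Type*} {G : SimpleGraph V} {c : Sym2 V → ℕ}

theorem palette_eq_image_neighborSet (v : V) :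
    palette G c v = (fun w => c s(v, w)) '' G.neighborSet v := by
  ext t
  constructor
  · rintro ⟨e, ⟨he, hv⟩, rfl⟩
    obtain ⟨w, rfl⟩ := Sym2.mem_iff_exists.mp hv
    exact ⟨w, he, rfl⟩
  · rintro ⟨w, hw, rfl⟩
    exact ⟨s(v, w), ⟨hw, Sym2.mem_mk_left v w⟩, rfl⟩

theorem isProperEdgeColoring_iff :
    IsProperEdgeColoring G c ↔ ∀ v, Set.InjOn (fun w => c s(v, w)) (G.neighborSet v) := by
  constructor
  · intro hc v w₁ hw₁ w₂ hw₂ h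
    by_contra hne
    exact hc _ hw₁ _ hw₂ (fun h => hne (Sym2.congr_right.mp h))
      ⟨v, Sym2.mem_mk_left v w₁, Sym2.mem_mk_left v w₂⟩ h
  · rintro hc e₁ he₁ e₂ he₂ hne ⟨v, hv₁, hv₂⟩ h
    obtain ⟨w₁, rfl⟩ := Sym2.mem_iff_exists.mp hv₁
    obtain ⟨w₂, rfl⟩ := Sym2.mem_iff_exists.mp hv₂
    exact hne (congrArg _ (hc v he₁ he₂ h))

theorem IsProperEdgeColoring.ncard_palette (hc : IsProperEdgeColoring G c) (v : V) :
    (palette G c v).ncard = (G.neighborSet v).ncard := by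
  rw [palette_eq_image_neighborSet, (isProperEdgeColoring_iff.mp hc v).ncard_image]

theorem numPalettes_le_choose (C : Finset ℕ) (k : ℕ)
    (hC : ∀ v, palette G c v ⊆ C ∧ (palette G c v).ncard = k) :
    numPalettes G c ≤ C.card.choose k := by
  let toSet : Finset ℕ → Set ℕ := fun s => s
  have hsub : Set.range (palette G c) ⊆ toSet '' ↑(C.powersetCard k) := by
    rintro _ ⟨v, rfl⟩
    obtain ⟨hvC, hvk⟩ := hC v
    have hfin : (palette G c v).Finite := C.finite_toSet.subset hvC
    refine ⟨hfin.toFinset, Finset.mem_powersetCard.mpr ⟨?_, ?_⟩, hfin.coe_toFinset⟩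
    · simpa using hvC
    · rw [← Set.ncard_eq_toFinset_card _ hfin, hvk]
  calc numPalettes G c ≤ (toSet '' ↑(C.powersetCard k)).ncard :=
        Set.ncard_le_ncard hsub ((C.powersetCard k).finite_toSet.image _)
    _ ≤ (↑(C.powersetCard k) : Set (Finset ℕ)).ncard := Set.ncard_image_le (Finset.finite_toSet _)
    _ = C.card.choose k := by rw [Set.ncard_coe_finset, Finset.card_powersetCard]

theorem paletteIndex_eq_of_forall_le {n : ℕ} (hc : IsProperEdgeColoring G c)
    (hcn : numPalettes G c ≤ n) (hmin : ∀ c', IsProperEdgeColoring G c' → n ≤ numPalettes G c') :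
    paletteIndex G = n := by
  have hcn' := le_antisymm hcn (hmin c hc)
  exact le_antisymm (Nat.sInf_le ⟨c, hc, hcn'⟩)
    (le_csInf ⟨n, c, hc, hcn'⟩ (by rintro _ ⟨c', hc', rfl⟩; exact hmin c' hc'))

end Palette

namespace SimpleGraph.Iso
variable {V W : Type*} {G : SimpleGraph V} {G' : SimpleGraph W} {c : Sym2 V → ℕ}

theorem isProperEdgeColoring_comp (φ : G ≃g G') (hc : IsProperEdgeColoring G c) :
    IsProperEdgeColoring G' (c ∘ Sym2.map φ.symm) :=
  isProperEdgeColoring_iff.mpr fun v _ hw₁ _ hw₂ h => φ.symm.injective <|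
    isProperEdgeColoring_iff.mp hc (φ.symm v) (φ.symm.map_adj_iff.mpr hw₁)
      (φ.symm.map_adj_iff.mpr hw₂) h

theorem palette_comp (φ : G ≃g G') (v : V) :
    palette G' (c ∘ Sym2.map φ.symm) (φ v) = palette G c v := by
  simp only [palette_eq_image_neighborSet]
  ext t
  constructor
  · rintro ⟨w, hw, rfl⟩
    refine ⟨φ.symm w, ?_, by simp⟩
    simpa using φ.symm.map_adj_iff.mpr hw
  · rintro ⟨w, hw, rfl⟩
    exact ⟨φ w, φ.map_adj_iff.mpr hw, by simp⟩

theorem numPalettes_comp (φ : G ≃g G') :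
    numPalettes G' (c ∘ Sym2.map φ.symm) = numPalettes G c := by
  rw [numPalettes, numPalettes, ← φ.surjective.range_comp]
  congr 2
  exact funext (palette_comp φ)

theorem exists_numPalettes_eq (φ : G ≃g G') {n : ℕ}
    (h : ∃ c, IsProperEdgeColoring G c ∧ numPalettes G c = n) :
    ∃ c', IsProperEdgeColoring G' c' ∧ numPalettes G' c' = n :=
  let ⟨_, hc, hn⟩ := h
  ⟨_, φ.isProperEdgeColoring_comp hc, φ.numPalettes_comp.trans hn⟩

theorem paletteIndex_eq (φ : G ≃g G') : paletteIndex G' = paletteIndex G := by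
  unfold paletteIndex
  congr 1
  ext n
  exact ⟨φ.symm.exists_numPalettes_eq, φ.exists_numPalettes_eq⟩

theorem ncard_neighborSet (φ : G ≃g G') (v : V) :
    (G'.neighborSet (φ v)).ncard = (G.neighborSet v).ncard := by
  simp only [← Nat.card_coe_set_eq]
  exact (Nat.card_congr (φ.mapNeighborSet v)).symm

end SimpleGraph.Iso

theorem card_lt_ncard_of_single_mem_span {K α ι : Type*} [Field K] [DecidableEq α] [Fintype ι]
    {S : Set (Set α)} (hS : S.Finite) (b : ι → α) (hb : Function.Injective b)
    (hι : 2 ≤ Fintype.card ι) (hcard : ∀ P ∈ S, P.ncard = Fintype.card ι)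
    (hspan : ∀ i, Pi.single (b i) 1 ∈ Submodule.span K ((fun P => P.indicator (1 : α → K)) '' S)) :
    Fintype.card ι < S.ncard := by
  have hSfin := hS.image fun P => P.indicator (1 : α → K)
  set W := Submodule.span K ((fun P => P.indicator (1 : α → K)) '' S)
  set D := Submodule.span K (Set.range fun i => (Pi.single (b i) 1 : α → K))
  have hDW : D ≤ W := Submodule.span_le.mpr (Set.range_subset_iff.mpr hspan)
  have hD : Module.finrank K D = Fintype.card ι :=
    finrank_span_eq_card ((Pi.linearIndependent_single_one α K).comp b hb)
  have : FiniteDimensional K W := FiniteDimensional.span_of_finite K hSfin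
  have hW : Module.finrank K W ≤ S.ncard := by
    have := hSfin.fintype
    calc Module.finrank K W ≤ _ := finrank_span_le_card _
      _ = _ := (Set.ncard_eq_toFinset_card' _).symm
      _ ≤ S.ncard := Set.ncard_image_le hS
  have hB : (Set.range b).ncard = Fintype.card ι := by
    rw [← Set.image_univ, Set.ncard_image_of_injective _ hb, Set.ncard_univ,
      Nat.card_eq_fintype_card]
  by_cases hSB : S ⊆ {Set.range b}
  · have hS1 := (Set.ncard_le_ncard hSB).trans_eq (Set.ncard_singleton _)
    have := Submodule.finrank_mono hDW
    omega
  obtain ⟨P, hPS, hPB⟩ := Set.not_subset.mp hSB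
  obtain ⟨t, htP, htB⟩ : ∃ t ∈ P, t ∉ Set.range b := by
    by_contra! h
    exact hPB (Set.eq_of_subset_of_ncard_le h (by rw [hB, hcard P hPS]) (Set.finite_range b))
  have hDt : D ≤ LinearMap.ker (LinearMap.proj t) :=
    Submodule.span_le.mpr <| Set.range_subset_iff.mpr fun i =>
      Pi.single_eq_of_ne (fun h => htB ⟨i, h.symm⟩) _
  have hDW' : D < W := by
    refine lt_of_le_of_ne hDW fun hDW => ?_
    have hPW : P.indicator 1 ∈ W := Submodule.subset_span ⟨P, hPS, rfl⟩
    have := hDt (hDW ▸ hPW)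
    simp [htP] at this
  calc Fintype.card ι = Module.finrank K D := hD.symm
    _ < Module.finrank K W := Submodule.finrank_lt_finrank_of_lt hDW'
    _ ≤ S.ncard := hW

theorem sum_sum_adj_eq_zero {V M : Type*} {G : SimpleGraph V} [DecidableRel G.Adj]
    [AddCommMonoid M] (hM : ∀ x : M, x + x = 0) (f : V → V → M) (hf : ∀ x y, f x y = f y x)
    (U : Finset V) :
    ∑ x ∈ U, ∑ y ∈ U, (if G.Adj x y then f x y else 0) = 0 := by
  rw [← Finset.sum_product']
  refine Finset.sum_involution (fun p _ => p.swap) (fun p _ => ?_) (fun p _ hp => ?_)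
    (fun p hp => Finset.mem_product.mpr (Finset.mem_product.mp hp).symm) (fun p _ => rfl)
  · simp only [Prod.fst_swap, Prod.snd_swap, G.adj_comm p.2, hf p.2]
    split_ifs <;> simp [hM]
  · intro hswap
    have hadj : G.Adj p.1 p.2 := by by_contra h; simp [h] at hp
    exact hadj.ne (congrArg Prod.fst hswap).symm

section Parity
variable {V : Type*} [Fintype V] {G : SimpleGraph V} [DecidableRel G.Adj] {c : Sym2 V → ℕ}

theorem IsProperEdgeColoring.indicator_palette (hc : IsProperEdgeColoring G c) (v : V) :
    (palette G c v).indicator (1 : ℕ → ZMod 2) =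
      ∑ y, if G.Adj v y then Pi.single (c s(v, y)) 1 else 0 := by
  have hinj : Set.InjOn (fun y => c s(v, y)) (G.neighborFinset v) := by
    simpa using isProperEdgeColoring_iff.mp hc v
  calc (palette G c v).indicator (1 : ℕ → ZMod 2)
      = ∑ s ∈ (G.neighborFinset v).image (fun y => c s(v, y)), Pi.single s 1 := by
        ext t
        simp [palette_eq_image_neighborSet, Set.indicator, Finset.sum_apply, Pi.single_apply]
    _ = ∑ y ∈ G.neighborFinset v, Pi.single (c s(v, y)) 1 := Finset.sum_image hinj
    _ = _ := by rw [neighborFinset_eq_filter, Finset.sum_filter]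

/-- The edges inside `U` are counted twice, so over `ZMod 2` only the single edge `uw` leaving `U`
survives. -/
theorem IsProperEdgeColoring.sum_indicator_palette [DecidableEq V]
    (hc : IsProperEdgeColoring G c) {U : Finset V} {u w : V} (hu : u ∈ U) (hw : w ∉ U)
    (huw : G.Adj u w) (hcut : ∀ x ∈ U, ∀ y ∉ U, G.Adj x y → x = u ∧ y = w) :
    ∑ v ∈ U, (palette G c v).indicator (1 : ℕ → ZMod 2) = Pi.single (c s(u, w)) 1 := by
  simp only [hc.indicator_palette, ← Finset.sum_add_sum_compl U, Finset.sum_add_distrib]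
  rw [sum_sum_adj_eq_zero CharTwo.add_self_eq_zero _ fun x y => by rw [Sym2.eq_swap], zero_add,
    Finset.sum_eq_single_of_mem u hu, Finset.sum_eq_single_of_mem w (Finset.mem_compl.mpr hw),
    if_pos huw]
  · intro y hy hyw
    exact if_neg fun h => hyw (hcut u hu y (Finset.mem_compl.mp hy) h).2
  · intro x hx hxu
    exact Finset.sum_eq_zero fun y hy =>
      if_neg fun h => hxu (hcut x hx y (Finset.mem_compl.mp hy) h).1

end Parity

instance (r : ℕ) : Fact (1 < r + 2) := ⟨by omega⟩

theorem ZMod.neg_ne_self_of_odd {r : ℕ} (hodd : Odd r) {p : ZMod (r + 2)} (hp : p ≠ 0) :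
    -p ≠ p := by
  rw [Ne, ZMod.neg_eq_self_iff]
  obtain ⟨k, rfl⟩ := hodd
  exact not_or.mpr ⟨hp, by omega⟩

theorem eq_of_add_mod_eq {n x y i : ℕ} (hx : x < n) (hy : y < n)
    (h : (x + i) % n = (y + i) % n) : x = y :=
  (Nat.ModEq.add_right_cancel' i h).eq_of_lt_of_lt hx hy

namespace MaxPalette

variable {r : ℕ}

/-- `none` is the hub and `some (i, p)` is the vertex `p` of the `i`-th gadget. -/
abbrev Vertex (r : ℕ) : Type := Option (Fin r × ZMod (r + 2))

def gadget (r : ℕ) : SimpleGraph (ZMod (r + 2)) where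
  Adj p q := p ≠ q ∧ p + q ≠ 0 ∧ s(p, q) ≠ s(0, 1)
  symm := ⟨fun p q h => ⟨h.1.symm, add_comm p q ▸ h.2.1, by rw [Sym2.eq_swap]; exact h.2.2⟩⟩
  loopless := ⟨fun _ h => h.1 rfl⟩

def graph (r : ℕ) : SimpleGraph (Vertex r) where
  Adj
    | none, none => False
    | none, some (_, p) | some (_, p), none => p = 1
    | some (i, p), some (j, q) => i = j ∧ (gadget r).Adj p q
  symm := by
    constructor
    rintro (_ | ⟨i, p⟩) (_ | ⟨j, q⟩) h
    exacts [h, h, h, ⟨h.1.symm, h.2.symm⟩]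
  loopless := by
    constructor
    rintro (_ | ⟨i, p⟩) h
    exacts [h, h.2.ne rfl]

theorem ncard_neighborSet_gadget (hodd : Odd r) (p : ZMod (r + 2)) :
    ((gadget r).neighborSet p).ncard + (if p = 1 then 1 else 0) = r := by
  have h01 : (0 : ZMod (r + 2)) ≠ 1 := zero_ne_one
  have hcompl : ∀ X : Set (ZMod (r + 2)), (gadget r).neighborSet p = Xᶜ →
      ((gadget r).neighborSet p).ncard = r + 2 - X.ncard := by
    rintro X hX
    rw [hX, Set.ncard_compl, Nat.card_zmod]
  have hr : 1 ≤ r := hodd.pos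
  by_cases hp1 : p = 1
  · subst hp1
    have hX : (gadget r).neighborSet 1 = {1, -1, 0}ᶜ := by
      ext q
      simp [gadget, add_eq_zero_iff_eq_neg']
      grind
    have h3 : ({1, -1, 0} : Set (ZMod (r + 2))).ncard = 3 := by
      rw [Set.ncard_insert_of_notMem, Set.ncard_pair (neg_ne_zero.mpr one_ne_zero)]
      simp [(ZMod.neg_ne_self_of_odd hodd one_ne_zero).symm, h01.symm]
    rw [hcompl _ hX, h3, if_pos rfl]
    omega
  by_cases hp0 : p = 0
  · subst hp0
    have hX : (gadget r).neighborSet 0 = {0, 1}ᶜ := by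
      ext q
      simp [gadget, add_eq_zero_iff_eq_neg']
      grind
    rw [hcompl _ hX, Set.ncard_pair h01, if_neg h01]
    omega
  · have hX : (gadget r).neighborSet p = {p, -p}ᶜ := by
      ext q
      simp [gadget, add_eq_zero_iff_eq_neg', hp0, hp1]
      grind
    rw [hcompl _ hX, Set.ncard_pair (ZMod.neg_ne_self_of_odd hodd hp0).symm, if_neg hp1]
    omega

theorem ncard_neighborSet_graph (hodd : Odd r) : ∀ v, ((graph r).neighborSet v).ncard = r
  | none => by
    have hN : (graph r).neighborSet none = Set.range fun i => some (i, 1) := by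
      ext (_ | ⟨j, q⟩) <;> simp [graph, eq_comm]
    rw [hN, Set.ncard_range_of_injective (fun i j h => by simpa using h),
      Nat.card_eq_fintype_card, Fintype.card_fin]
  | some (i, p) => by
    have hN : (graph r).neighborSet (some (i, p)) =
        (fun q => some (i, q)) '' (gadget r).neighborSet p ∪ {x | x = none ∧ p = 1} := by
      ext (_ | ⟨j, q⟩) <;> simp [graph, eq_comm, and_comm]
    rw [hN, Set.ncard_union_eq (by simp [Set.disjoint_left]),
      Set.ncard_image_of_injective _ (fun q q' h => by simpa using h)]
    convert ncard_neighborSet_gadget hodd p using 2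
    by_cases hp : p = 1 <;> simp [hp]

/-- A gadget edge `pq` of the `i`-th gadget gets the class `p + q ∈ ZMod (r + 2) \ {0}`, rotated
by `i`, so that the class `1`, which is missing at its vertex `1`, becomes the color `i` of its hub
edge. The values at non-adjacent pairs are irrelevant (`min` only makes the function symmetric). -/
def edgeColor (r : ℕ) : Vertex r → Vertex r → ℕ
  | none, none => 0
  | none, some (i, _) | some (i, _), none => i
  | some (i, p), some (j, q) => ((p + q).val - 1 + min i j) % (r + 1)

def coloring (r : ℕ) : Sym2 (Vertex r) → ℕ :=
  Sym2.lift ⟨edgeColor r, by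
    rintro (_ | ⟨i, p⟩) (_ | ⟨j, q⟩) <;> simp [edgeColor, add_comm, min_comm]⟩

theorem edgeColor_lt : ∀ v w, edgeColor r v w < r + 1
  | none, none => r.succ_pos
  | none, some (i, _) | some (i, _), none => i.isLt.trans r.lt_succ_self
  | some _, some _ => Nat.mod_lt _ r.succ_pos

theorem coloring_lt (e : Sym2 (Vertex r)) : coloring r e < r + 1 :=
  Sym2.ind edgeColor_lt e

theorem eq_of_gadgetColor_eq {p q q' : ZMod (r + 2)} (hq : p + q ≠ 0) (hq' : p + q' ≠ 0) (i : ℕ)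
    (h : ((p + q).val - 1 + i) % (r + 1) = ((p + q').val - 1 + i) % (r + 1)) : q = q' := by
  have := eq_of_add_mod_eq (by have := (p + q).val_lt; omega)
    (by have := (p + q').val_lt; omega) h
  have := (ZMod.val_ne_zero _).mpr hq
  have := (ZMod.val_ne_zero _).mpr hq'
  exact add_left_cancel (a := p) (ZMod.val_injective (r + 2) (by omega))

theorem hub_color_ne (i : Fin r) {q : ZMod (r + 2)} (hq : (gadget r).Adj 1 q) :
    (i : ℕ) ≠ ((1 + q).val - 1 + i) % (r + 1) := by
  intro h
  have h0 : ((1 + 0 : ZMod (r + 2)).val - 1 + i) % (r + 1) = ((1 + q).val - 1 + i) % (r + 1) := by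
    rw [← h]
    simp [ZMod.val_one, Nat.mod_eq_of_lt (i.isLt.trans r.lt_succ_self)]
  have hq0 := eq_of_gadgetColor_eq (by simp) hq.2.1 i h0
  exact hq.2.2 (by rw [← hq0]; exact Sym2.eq_swap)

theorem isProperEdgeColoring_coloring : IsProperEdgeColoring (graph r) (coloring r) := by
  refine isProperEdgeColoring_iff.mpr ?_
  rintro (_ | ⟨i, p⟩) (_ | ⟨j, q⟩) hw₁ (_ | ⟨k, q'⟩) hw₂ h <;>
    simp only [graph, mem_neighborSet] at hw₁ hw₂ <;>
    simp only [coloring, Sym2.lift_mk, edgeColor] at h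
  · subst hw₁ hw₂
    rw [Fin.ext h]
  · rfl
  · obtain ⟨rfl, hadj⟩ := hw₂
    subst hw₁
    exact (hub_color_ne i hadj (by simpa using h)).elim
  · obtain ⟨rfl, hadj⟩ := hw₁
    subst hw₂
    exact (hub_color_ne i hadj (by simpa using h.symm)).elim
  · obtain ⟨rfl, hadj⟩ := hw₁
    obtain ⟨rfl, hadj'⟩ := hw₂
    rw [eq_of_gadgetColor_eq hadj.2.1 hadj'.2.1 i (by simpa using h)]

theorem numPalettes_coloring_le (hodd : Odd r) : numPalettes (graph r) (coloring r) ≤ r + 1 := by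
  have h := numPalettes_le_choose (G := graph r) (Finset.range (r + 1)) r fun v =>
    ⟨by rintro _ ⟨e, -, rfl⟩; simpa using coloring_lt e,
      isProperEdgeColoring_coloring.ncard_palette v ▸ ncard_neighborSet_graph hodd v⟩
  rwa [Finset.card_range, Nat.choose_succ_self_right] at h

theorem lt_numPalettes (hodd : Odd r) (hr : 2 ≤ r) {c : Sym2 (Vertex r) → ℕ}
    (hc : IsProperEdgeColoring (graph r) c) : r < numPalettes (graph r) c := by
  classical
  have hadj : ∀ i : Fin r, (graph r).Adj (some (i, 1)) none := fun _ => rfl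
  have hb : Function.Injective fun i : Fin r => c s(some (i, 1), none) := by
    intro i j h
    simp only [Sym2.eq_swap (a := some (_, _))] at h
    simpa using isProperEdgeColoring_iff.mp hc none (hadj i).symm (hadj j).symm h
  have hspan : ∀ i : Fin r, Pi.single (c s(some (i, 1), none)) 1 ∈ Submodule.span (ZMod 2)
      ((fun P => P.indicator (1 : ℕ → ZMod 2)) '' Set.range (palette (graph r) c)) := by
    intro i
    rw [← hc.sum_indicator_palette (U := Finset.univ.image fun p => some (i, p)) (by simp)
      (by simp) (hadj i)]
    · exact Submodule.sum_mem _ fun v _ => Submodule.subset_span ⟨_, ⟨v, rfl⟩, rfl⟩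
    · rintro _ hx y hy hxy
      obtain ⟨p, -, rfl⟩ := Finset.mem_image.mp hx
      rcases y with _ | ⟨j, q⟩
      · exact ⟨by rw [show p = 1 from hxy], rfl⟩
      · obtain ⟨rfl, -⟩ := hxy
        exact absurd (Finset.mem_image.mpr ⟨q, Finset.mem_univ _, rfl⟩) hy
  have hcard : ∀ P ∈ Set.range (palette (graph r) c), P.ncard = Fintype.card (Fin r) := by
    rintro _ ⟨v, rfl⟩
    rw [hc.ncard_palette, ncard_neighborSet_graph hodd, Fintype.card_fin]
  simpa [numPalettes] using
    card_lt_ncard_of_single_mem_span (Set.finite_range _) _ hb (by simpa using hr) hcard hspan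

end MaxPalette

theorem exists_odd_regular_max_palette_index (r : ℕ) (hodd : Odd r) (hr : 3 ≤ r) :
    ∃ (n : ℕ) (G : SimpleGraph (Fin n)),
      (∀ v, (G.neighborSet v).ncard = r) ∧ paletteIndex G = r + 1 := by
  let φ := (MaxPalette.graph r).overFinIso rfl
  refine ⟨_, (MaxPalette.graph r).overFin rfl, fun v => ?_, ?_⟩
  · rw [← φ.apply_symm_apply v, φ.ncard_neighborSet, MaxPalette.ncard_neighborSet_graph hodd]
  · rw [φ.paletteIndex_eq]
    exact paletteIndex_eq_of_forall_le MaxPalette.isProperEdgeColoring_coloring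
      (MaxPalette.numPalettes_coloring_le hodd)
      fun c hc => MaxPalette.lt_numPalettes hodd (by omega) hc
end

section
/- For every positive integer k there exists a finite simple (2k+1)-regular graph G admitting a vertex v such that every edge incident to v is a bridge of G. -/
open SimpleGraph

/-!
Take `2k+1` disjoint copies of a graph on `2k+3` vertices in which one vertex `w` has degree `2k`
and all others have degree `2k+1`, and join a new hub vertex to the copy of `w` in each of them.
The result is `(2k+1)`-regular, and each edge at the hub is the only edge leaving its copy, hence a
bridge. As the gadget we take the complement of a perfect matching on `2k+2` vertices with an extra
pendant edge at `w`: there `w` misses two of the other `2k+2` vertices and every other vertex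
misses one.
-/

theorem Option.some_prodMk_right_injective {α β : Type*} (a : α) :
    Function.Injective fun b : β ↦ (some (a, b) : Option (α × β)) :=
  (Option.some_injective _).comp (Prod.mk_right_injective a)

theorem natCard_option_fin_prod_bool {k : ℕ} :
    Nat.card (Option (Fin (k + 1) × Bool)) = 2 * k + 3 := by
  simp only [Nat.card_eq_fintype_card, Fintype.card_option, Fintype.card_prod, Fintype.card_fin,
    Fintype.card_bool]
  ring

namespace SimpleGraph

variable {V V' : Type*} {G : SimpleGraph V} {G' : SimpleGraph V'}

theorem isBridge_of_forall_adj_leaving {S : Set V} {u v : V} (hu : u ∈ S) (hv : v ∉ S)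
    (hS : ∀ x ∈ S, ∀ y ∉ S, G.Adj x y → x = u ∧ y = v) : G.IsBridge s(u, v) := by
  rw [isBridge_iff_forall_walk_mem_edges]
  intro p
  obtain ⟨d, hd, hdS, hdS'⟩ := p.exists_boundary_dart S hu hv
  obtain ⟨h₁, h₂⟩ := hS _ hdS _ hdS' d.adj
  have hedge : d.edge = s(u, v) := by rw [Dart.edge, ← h₁, ← h₂]
  exact hedge ▸ List.mem_map_of_mem hd

theorem ncard_neighborSet_compl [Finite V] (G : SimpleGraph V) (v : V) :
    (Gᶜ.neighborSet v).ncard = Nat.card V - 1 - (G.neighborSet v).ncard := by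
  rw [neighborSet_compl, Set.ncard_sdiff_singleton_of_mem (by simp), Set.ncard_compl,
    Nat.sub_right_comm]

theorem Iso.isBridge_map_iff (φ : G ≃g G') {e : Sym2 V} :
    G'.IsBridge (e.map φ) ↔ G.IsBridge e := by
  induction e with | h u v => ?_
  rw [Sym2.map_mk, isBridge_iff, isBridge_iff, not_iff_not]
  let ψ : G.deleteEdges {s(u, v)} ≃g G'.deleteEdges {s(φ u, φ v)} :=
    { φ.toEquiv with
      map_rel_iff' := by
        intro a b
        simp only [deleteEdges_adj, Set.mem_singleton_iff, ← Sym2.map_mk]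
        exact and_congr φ.map_adj_iff (Sym2.map.injective φ.injective).eq_iff.not }
  exact ψ.reachable_iff

theorem Iso.forall_isBridge_of_mem_incidenceSet (φ : G ≃g G') {v : V}
    (hv : ∀ e ∈ G.incidenceSet v, G.IsBridge e) :
    ∀ e ∈ G'.incidenceSet (φ v), G'.IsBridge e := by
  intro e ⟨he, hve⟩
  have hmap : (e.map φ.symm).map φ = e := by simp [Sym2.map_map]
  rw [← hmap, φ.isBridge_map_iff]
  refine hv _ ⟨φ.symm.map_mem_edgeSet_iff.2 he, ?_⟩
  exact Sym2.mem_map.2 ⟨_, hve, φ.symm_apply_apply v⟩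

theorem Iso.ncard_neighborSet_eq (φ : G ≃g G') (v : V) :
    (G'.neighborSet (φ v)).ncard = (G.neighborSet v).ncard := by
  rw [← φ.image_neighborSet, Set.ncard_image_of_injective _ φ.injective]

variable {W : Type*}

def hubJoin (H : SimpleGraph W) (w : W) (ι : Type*) : SimpleGraph (Option (ι × W)) where
  Adj
    | none, none => False
    | none, some (_, x) | some (_, x), none => x = w
    | some (i, x), some (j, y) => i = j ∧ H.Adj x y
  symm := ⟨by
    rintro (_ | ⟨i, x⟩) (_ | ⟨j, y⟩) h
    exacts [h, h, h, ⟨h.1.symm, h.2.symm⟩]⟩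
  loopless := ⟨by rintro (_ | ⟨i, x⟩) h; exacts [h, h.2.ne rfl]⟩

variable {ι : Type*} {H : SimpleGraph W} {w : W}

@[simp] theorem hubJoin_adj_none_some {i : ι} {x : W} :
    (hubJoin H w ι).Adj none (some (i, x)) ↔ x = w := .rfl

@[simp] theorem hubJoin_adj_some_none {i : ι} {x : W} :
    (hubJoin H w ι).Adj (some (i, x)) none ↔ x = w := .rfl

@[simp] theorem hubJoin_adj_some_some {i j : ι} {x y : W} :
    (hubJoin H w ι).Adj (some (i, x)) (some (j, y)) ↔ i = j ∧ H.Adj x y := .rfl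

theorem neighborSet_hubJoin_none :
    (hubJoin H w ι).neighborSet none = Set.range fun i ↦ some (i, w) := by
  ext (_ | ⟨i, x⟩) <;> simp [eq_comm, and_comm]

theorem ncard_neighborSet_hubJoin_none :
    ((hubJoin H w ι).neighborSet none).ncard = Nat.card ι := by
  rw [neighborSet_hubJoin_none, Set.ncard_range_of_injective fun _ _ h ↦ by simpa using h]

theorem ncard_neighborSet_hubJoin_some_self [Finite W] (i : ι) :
    ((hubJoin H w ι).neighborSet (some (i, w))).ncard = (H.neighborSet w).ncard + 1 := by
  have : (hubJoin H w ι).neighborSet (some (i, w)) =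
      insert none ((fun x ↦ some (i, x)) '' H.neighborSet w) := by
    ext (_ | ⟨j, y⟩) <;> simp [eq_comm, and_comm]
  rw [this, Set.ncard_insert_of_notMem (by simp),
    Set.ncard_image_of_injective _ (Option.some_prodMk_right_injective i)]

theorem ncard_neighborSet_hubJoin_some_of_ne (i : ι) {x : W} (hx : x ≠ w) :
    ((hubJoin H w ι).neighborSet (some (i, x))).ncard = (H.neighborSet x).ncard := by
  have : (hubJoin H w ι).neighborSet (some (i, x)) =
      (fun y ↦ some (i, y)) '' H.neighborSet x := by
    ext (_ | ⟨j, y⟩) <;> simp [hx, eq_comm, and_comm]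
  rw [this, Set.ncard_image_of_injective _ (Option.some_prodMk_right_injective i)]

theorem ncard_neighborSet_hubJoin_eq [Finite W] {r : ℕ} (hι : Nat.card ι = r)
    (hw : (H.neighborSet w).ncard + 1 = r) (hH : ∀ x ≠ w, (H.neighborSet x).ncard = r) :
    ∀ v, ((hubJoin H w ι).neighborSet v).ncard = r := by
  rintro (_ | ⟨i, x⟩)
  · rwa [ncard_neighborSet_hubJoin_none]
  · obtain rfl | hx := eq_or_ne x w
    · rwa [ncard_neighborSet_hubJoin_some_self]
    · rw [ncard_neighborSet_hubJoin_some_of_ne i hx, hH x hx]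

theorem isBridge_of_mem_incidenceSet_hubJoin_none {e : Sym2 (Option (ι × W))}
    (he : e ∈ (hubJoin H w ι).incidenceSet none) : (hubJoin H w ι).IsBridge e := by
  obtain ⟨y, rfl⟩ := Sym2.mem_iff_exists.1 he.2
  obtain ⟨i, rfl⟩ : ∃ i, y = some (i, w) := by
    simpa [neighborSet_hubJoin_none, eq_comm] using (mem_incidence_iff_neighbor _).1 he
  rw [Sym2.eq_swap]
  refine isBridge_of_forall_adj_leaving (S := Set.range fun x ↦ some (i, x)) ⟨w, rfl⟩
    (by simp) ?_
  rintro _ ⟨x, rfl⟩ (_ | ⟨j, y⟩) hy h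
  · simp_all
  · exact absurd ⟨y, by simp [h.1]⟩ hy

def pendantMatching (k : ℕ) : SimpleGraph (Option (Fin (k + 1) × Bool)) where
  Adj
    | none, none => False
    | none, some p | some p, none => p = (0, false)
    | some (i, b), some (j, c) => i = j ∧ b ≠ c
  symm := ⟨by
    rintro (_ | ⟨i, b⟩) (_ | ⟨j, c⟩) h
    exacts [h, h, h, ⟨h.1.symm, h.2.symm⟩]⟩
  loopless := ⟨by rintro (_ | ⟨i, b⟩) h; exacts [h, h.2 rfl]⟩

variable {k : ℕ}

theorem neighborSet_pendantMatching_none :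
    (pendantMatching k).neighborSet none = {some (0, false)} := by
  ext (_ | p) <;> simp [pendantMatching]

theorem neighborSet_pendantMatching_zero_false :
    (pendantMatching k).neighborSet (some (0, false)) = {none, some (0, true)} := by
  ext (_ | ⟨j, c⟩) <;> simp [pendantMatching, eq_comm]

theorem neighborSet_pendantMatching_some_of_ne {p : Fin (k + 1) × Bool} (hp : p ≠ (0, false)) :
    (pendantMatching k).neighborSet (some p) = {some (p.1, !p.2)} := by
  obtain ⟨i, b⟩ := p
  ext (_ | ⟨j, c⟩)
  · simpa [pendantMatching] using hp
  · cases b <;> cases c <;> simp [pendantMatching, eq_comm]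

theorem ncard_neighborSet_compl_pendantMatching_zero_false :
    ((pendantMatching k)ᶜ.neighborSet (some (0, false))).ncard = 2 * k := by
  rw [ncard_neighborSet_compl, natCard_option_fin_prod_bool,
    neighborSet_pendantMatching_zero_false, Set.ncard_pair (by simp)]
  omega

theorem ncard_neighborSet_compl_pendantMatching_of_ne {x : Option (Fin (k + 1) × Bool)}
    (hx : x ≠ some (0, false)) : ((pendantMatching k)ᶜ.neighborSet x).ncard = 2 * k + 1 := by
  have : ((pendantMatching k).neighborSet x).ncard = 1 := by
    obtain _ | p := x
    · rw [neighborSet_pendantMatching_none, Set.ncard_singleton]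
    · rw [neighborSet_pendantMatching_some_of_ne (by simpa using hx), Set.ncard_singleton]
  rw [ncard_neighborSet_compl, natCard_option_fin_prod_bool, this]
  omega

end SimpleGraph

theorem exists_odd_regular_with_bridge_vertex_general (k : ℕ) :
    ∃ (n : ℕ) (G : SimpleGraph (Fin n)),
      (∀ v, (G.neighborSet v).ncard = 2 * k + 1) ∧
      ∃ v, ∀ e ∈ G.incidenceSet v, G.IsBridge e := by
  set G := hubJoin (pendantMatching k)ᶜ (some (0, false)) (Fin (2 * k + 1))
  have hG : ∀ v, (G.neighborSet v).ncard = 2 * k + 1 :=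
    ncard_neighborSet_hubJoin_eq (by simp)
      (by rw [ncard_neighborSet_compl_pendantMatching_zero_false])
      fun _ ↦ ncard_neighborSet_compl_pendantMatching_of_ne
  let φ := G.overFinIso rfl
  refine ⟨_, G.overFin rfl, fun v ↦ ?_, φ none,
    φ.forall_isBridge_of_mem_incidenceSet fun _ ↦ isBridge_of_mem_incidenceSet_hubJoin_none⟩
  rw [← φ.apply_symm_apply v, φ.ncard_neighborSet_eq, hG]

theorem exists_odd_regular_with_bridge_vertex (k : ℕ) (hk : 0 < k) :
    ∃ (n : ℕ) (G : SimpleGraph (Fin n)),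
      (∀ v, (G.neighborSet v).ncard = 2 * k + 1) ∧
      ∃ v, ∀ e ∈ G.incidenceSet v, G.IsBridge e :=
  exists_odd_regular_with_bridge_vertex_general k
end
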